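/- arXiv:1111.5979 — 2 statements merged into one kernel-verified Lean document; each statement's English description precedes it below -/
import Mathlib

section
/- Let D be a finite set of points in ℝ² whose pairwise Euclidean distances are all at least 2, let L = lift(D), let B be the set of blocking points, and let P = L ∪ B; suppose L and B are disjoint. If I ⊆ D is an independent set (all pairwise distances in I exceed 2), then the set S = lift(I) ∪ B ⊆ P is in empty convex position: S is in convex position and the convex hull of S contains no point of P \ S. -/
/-- The standard lifting map to the elliptic paraboloid: `(x₁, x₂) ↦ (x₁, x₂, x₁² + x₂²)`. -/
noncomputable def lift (x : EuclideanSpace ℝ (Fin 2)) : EuclideanSpace ℝ (Fin 3) :=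
  (WithLp.equiv 2 (Fin 3 → ℝ)).symm ![x 0, x 1, x 0 ^ 2 + x 1 ^ 2]

/-- The set of blocking points of `D`: midpoints `(lift c + lift c')/2` over all touching
pairs `c, c' ∈ D` (i.e. pairs with `dist c c' = 2`). -/
noncomputable def blockers (D : Set (EuclideanSpace ℝ (Fin 2))) :
    Set (EuclideanSpace ℝ (Fin 3)) :=
  {b | ∃ c ∈ D, ∃ c' ∈ D, dist c c' = 2 ∧ b = (1 / 2 : ℝ) • (lift c + lift c')}

/-!
For `a ∈ ℝ²` the linear functional `z ↦ z₂ - 2 ⟪a, (z₀, z₁)⟫` takes the value `‖x - a‖² - ‖a‖²`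
at `lift x`, and the average of the two values at a blocker. With `a = y` it is minimised over
`L ∪ B` exactly at `lift y`, so every lifted point is a vertex. For the blocker `b` of a touching
pair `c, c'`, take `a` the midpoint of `c c'`: by Apollonius every other point of `D` is at squared
distance `≥ 3` from it while `c, c'` are at distance `1`, so on `S \ {b}` the functional is
minimised, with the same value as at `b`, only at `lift c` (we may assume `c' ∉ I`, as `I` is
independent). Tilting the functional slightly breaks this tie in favour of `b`.
-/

open Topology

section LexSeparation

variable {E : Type*} [AddCommGroup E] [Module ℝ E] {T : Set E} {x : E}

theorem notMem_convexHull_of_forall_lt (f : E →ₗ[ℝ] ℝ) (h : ∀ t ∈ T, f x < f t) :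
    x ∉ convexHull ℝ T := fun hx =>
  (lt_irrefl (f x)) (convexHull_min h (convex_halfSpace_gt f.isLinear (f x)) hx)

open Filter in
/-- On a finite set the lexicographic order of `(f, g)` is realised by `f + ε • g` for small
`ε > 0`. -/
theorem notMem_convexHull_of_forall_lex (hT : T.Finite) (f g : E →ₗ[ℝ] ℝ)
    (h : ∀ t ∈ T, f x < f t ∨ f x = f t ∧ g x < g t) : x ∉ convexHull ℝ T := by
  have hε : ∀ᶠ ε in 𝓝[>] (0 : ℝ), ∀ t ∈ T, f x + ε * g x < f t + ε * g t := by
    refine hT.eventually_all.2 fun t ht => ?_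
    rcases h t ht with hlt | ⟨heq, hlt⟩
    · have hcont :
          Tendsto (fun ε : ℝ => f t - f x + ε * (g t - g x)) (𝓝 0) (𝓝 (f t - f x)) := by
        simpa using (tendsto_const_nhds (x := f t - f x)).add
          ((tendsto_id (x := 𝓝 (0 : ℝ))).mul_const (g t - g x))
      filter_upwards [nhdsWithin_le_nhds (hcont.eventually (lt_mem_nhds (sub_pos.2 hlt)))]
        with ε hε
      linarith
    · filter_upwards [self_mem_nhdsWithin] with ε (hε : 0 < ε)
      nlinarith
  obtain ⟨ε, hε⟩ := hε.exists
  exact notMem_convexHull_of_forall_lt (f + ε • g) (by simpa using hε)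

end LexSeparation

theorem three_le_dist_midpoint_sq {V : Type*} [NormedAddCommGroup V] [InnerProductSpace ℝ V]
    {x c c' : V} (hc : 2 ≤ dist x c) (hc' : 2 ≤ dist x c') (hcc : dist c c' = 2) :
    3 ≤ dist x (midpoint ℝ c c') ^ 2 := by
  nlinarith [EuclideanGeometry.dist_sq_add_dist_sq_eq_two_mul_dist_midpoint_sq_add_half_dist_sq
    x c c']

noncomputable def powerFunctional (a : EuclideanSpace ℝ (Fin 2)) :
    EuclideanSpace ℝ (Fin 3) →ₗ[ℝ] ℝ where
  toFun z := z 2 - 2 * (a 0 * z 0 + a 1 * z 1)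
  map_add' _ _ := by simp only [PiLp.add_apply]; ring
  map_smul' _ _ := by simp only [PiLp.smul_apply, smul_eq_mul, RingHom.id_apply]; ring

theorem powerFunctional_lift (a x : EuclideanSpace ℝ (Fin 2)) :
    powerFunctional a (lift x) = dist x a ^ 2 - ‖a‖ ^ 2 := by
  simp [powerFunctional, lift, EuclideanSpace.dist_sq_eq, EuclideanSpace.real_norm_sq_eq,
    Fin.sum_univ_two, Real.dist_eq, sq_abs]
  ring

theorem powerFunctional_blocker (a c c' : EuclideanSpace ℝ (Fin 2)) :
    powerFunctional a ((1 / 2 : ℝ) • (lift c + lift c')) =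
      (dist c a ^ 2 + dist c' a ^ 2) / 2 - ‖a‖ ^ 2 := by
  rw [map_smul, map_add, powerFunctional_lift, powerFunctional_lift, smul_eq_mul]
  ring

theorem finite_blockers {D : Set (EuclideanSpace ℝ (Fin 2))} (hD : D.Finite) :
    (blockers D).Finite :=
  ((hD.prod hD).image fun p => (1 / 2 : ℝ) • (lift p.1 + lift p.2)).subset <| by
    rintro b ⟨c, hc, c', hc', -, rfl⟩
    exact ⟨(c, c'), ⟨hc, hc'⟩, rfl⟩

theorem lift_notMem_convexHull (D : Set (EuclideanSpace ℝ (Fin 2)))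
    (y : EuclideanSpace ℝ (Fin 2)) :
    lift y ∉ convexHull ℝ ((lift '' D ∪ blockers D) \ {lift y}) := by
  refine notMem_convexHull_of_forall_lt (powerFunctional y) ?_
  rintro t ⟨⟨x, -, rfl⟩ | ⟨c, -, c', -, hcc, rfl⟩, hne⟩
  · have hxy : x ≠ y := by rintro rfl; exact hne rfl
    rw [powerFunctional_lift, powerFunctional_lift, dist_self]
    have := dist_pos.2 hxy
    nlinarith
  · rw [powerFunctional_lift, powerFunctional_blocker, dist_self]
    nlinarith [dist_triangle_right c c' y, sq_nonneg (dist c y - dist c' y)]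

theorem eq_or_eq_or_three_le_dist_midpoint_sq {D : Set (EuclideanSpace ℝ (Fin 2))}
    (hsep : ∀ p ∈ D, ∀ q ∈ D, p ≠ q → 2 ≤ dist p q) {c c' : EuclideanSpace ℝ (Fin 2)}
    (hc : c ∈ D) (hc' : c' ∈ D) (hcc : dist c c' = 2) {x : EuclideanSpace ℝ (Fin 2)} (hx : x ∈ D) :
    x = c ∨ x = c' ∨ 3 ≤ dist x (midpoint ℝ c c') ^ 2 := by
  by_cases hxc : x = c
  · exact .inl hxc
  by_cases hxc' : x = c'
  · exact .inr (.inl hxc')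
  exact .inr <| .inr <| three_le_dist_midpoint_sq (hsep x hx c hc hxc) (hsep x hx c' hc' hxc') hcc

theorem blocker_notMem_convexHull {D : Set (EuclideanSpace ℝ (Fin 2))} (hD : D.Finite)
    (hsep : ∀ p ∈ D, ∀ q ∈ D, p ≠ q → 2 ≤ dist p q) {c c' : EuclideanSpace ℝ (Fin 2)}
    (hc : c ∈ D) (hc' : c' ∈ D) (hcc : dist c c' = 2) :
    (1 / 2 : ℝ) • (lift c + lift c') ∉
      convexHull ℝ ((lift '' (D \ {c'}) ∪ blockers D) \ {(1 / 2 : ℝ) • (lift c + lift c')}) := by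
  set m := midpoint ℝ c c'
  have hcm : dist c m = 1 := by simp [m, dist_left_midpoint, hcc]
  have hc'm : dist c' m = 1 := by simp [m, dist_right_midpoint, hcc]
  have hfar {x} (hx : x ∈ D) := eq_or_eq_or_three_le_dist_midpoint_sq hsep hc hc' hcc hx
  -- the tilt `powerFunctional c' - powerFunctional c` exceeds its value at `b` by `4` at `lift c`
  refine notMem_convexHull_of_forall_lex
    ((((hD.sdiff).image lift).union (finite_blockers hD)).sdiff)
    (powerFunctional m) (powerFunctional c' - powerFunctional c) ?_
  rintro t ⟨⟨x, ⟨hx, hxc'⟩, rfl⟩ | ⟨d, hd, d', hd', hdd, rfl⟩, hne⟩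
  · simp only [LinearMap.sub_apply, powerFunctional_lift, powerFunctional_blocker]
    rcases hfar hx with rfl | rfl | h3
    · right
      rw [hcm, hc'm, dist_self, dist_self, dist_comm c' x, hcc]
      constructor <;> linarith
    · exact absurd rfl hxc'
    · left
      rw [hcm, hc'm]
      linarith
  · -- every touching pair other than `{c, c'}` has an endpoint far from `m`
    left
    simp only [powerFunctional_blocker]
    have hdd' : d ≠ d' := by rintro rfl; simp at hdd
    rcases hfar hd with rfl | rfl | h3 <;> rcases hfar hd' with rfl | rfl | h3' <;>
      first
      | exact absurd rfl hdd'
      | exact absurd rfl hne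
      | exact absurd (congrArg ((1 / 2 : ℝ) • ·) (add_comm _ _)) hne
      | nlinarith

theorem independent_gives_empty_convex_position_general (D : Set (EuclideanSpace ℝ (Fin 2)))
    (hD : D.Finite) (hsep : ∀ p ∈ D, ∀ q ∈ D, p ≠ q → 2 ≤ dist p q)
    (I : Set (EuclideanSpace ℝ (Fin 2))) (hI : I ⊆ D)
    (hind : ∀ p ∈ I, ∀ q ∈ I, p ≠ q → 2 < dist p q) :
    (∀ p ∈ lift '' I ∪ blockers D,
        p ∉ convexHull ℝ ((lift '' I ∪ blockers D) \ {p})) ∧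
    ∀ p ∈ (lift '' D ∪ blockers D) \ (lift '' I ∪ blockers D),
        p ∉ convexHull ℝ (lift '' I ∪ blockers D) := by
  have hS : lift '' I ∪ blockers D ⊆ lift '' D ∪ blockers D :=
    Set.union_subset_union_left _ (Set.image_mono hI)
  refine ⟨?_, ?_⟩
  · rintro p (⟨y, -, rfl⟩ | ⟨c, hc, c', hc', hcc, rfl⟩)
    · exact fun h =>
        lift_notMem_convexHull D y (convexHull_mono (Set.sdiff_subset_sdiff_left hS) h)
    wlog hc'I : c' ∉ I generalizing c c'
    · have hcc' : c ≠ c' := by rintro rfl; simp at hcc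
      have hcI : c ∉ I := fun hcI => (hind c hcI c' (not_not.1 hc'I) hcc').ne' hcc
      rw [add_comm]
      exact this c' hc' c hc (dist_comm c c' ▸ hcc) hcI
    refine fun h => blocker_notMem_convexHull hD hsep hc hc' hcc (convexHull_mono ?_ h)
    refine Set.sdiff_subset_sdiff_left (Set.union_subset_union_left _ ?_)
    exact Set.image_mono fun x hx => ⟨hI hx, fun hxc' => hc'I (hxc' ▸ hx)⟩
  · rintro p ⟨⟨d, -, rfl⟩ | hpB, hpS⟩
    · exact fun h =>
        lift_notMem_convexHull D d (convexHull_mono (Set.subset_sdiff_singleton hS hpS) h)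
    · exact absurd (Or.inr hpB) hpS

/-- Let `D ⊆ ℝ²` be finite with pairwise distances at least `2`, let
`L = lift '' D`, `B` the blocking points, `P = L ∪ B`, with `L` and `B` disjoint. If
`I ⊆ D` is an independent set (all pairwise distances in `I` exceed `2`), then
`S = lift '' I ∪ B` is in empty convex position: `S` is in convex position and the convex
hull of `S` contains no point of `P \ S`. -/
theorem independent_gives_empty_convex_position (D : Set (EuclideanSpace ℝ (Fin 2)))
    (hD : D.Finite) (hsep : ∀ p ∈ D, ∀ q ∈ D, p ≠ q → 2 ≤ dist p q)
    (hdisj : Disjoint (lift '' D) (blockers D))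
    (I : Set (EuclideanSpace ℝ (Fin 2))) (hI : I ⊆ D)
    (hind : ∀ p ∈ I, ∀ q ∈ I, p ≠ q → 2 < dist p q) :
    (∀ p ∈ lift '' I ∪ blockers D,
        p ∉ convexHull ℝ ((lift '' I ∪ blockers D) \ {p})) ∧
    ∀ p ∈ (lift '' D ∪ blockers D) \ (lift '' I ∪ blockers D),
        p ∉ convexHull ℝ (lift '' I ∪ blockers D) :=
  independent_gives_empty_convex_position_general D hD hsep I hI hind
end

section
/- Let D be a finite set of points in ℝ² whose pairwise Euclidean distances are all at least 2, let L = lift(D), let B be the set of blocking points, and suppose L and B are disjoint; let m be a natural number with m ≥ 1. Then the following are equivalent: (1) for every convex set C ⊆ ℝ³ with |C ∩ L| ≥ m, the intersection C ∩ B is nonempty (i.e., B is a weak (m/|D|)-net for L with respect to convex sets); (2) D contains no independent set of size m. -/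
/-!
A point `z ∈ ℝ²` defines an affine function on `ℝ³` whose value at `lift x` is `dist x z ^ 2`,
so disks around `z` are cut out of the paraboloid by half-spaces. Centred at `x`, it shows that
lifted points are in convex position. Centred at `c'`, it gives the blocking point
`(lift c + lift c') / 2` the value `dist c c' ^ 2 / 2 = 2`, while the lift of every other centre
gets a value `≥ 4`. An independent set misses `c` or `c'`, so a half-space separates the blocking
point from the convex hull of its lift, which contains exactly `m` lifted centres. Conversely,
among `m` lifted centres in a convex set two touch, and their blocking point is the midpoint of
their lifts.
-/

lemma lift_injective : Function.Injective lift := by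
  intro x y h
  have h0 : x 0 = y 0 := congrFun (congrArg (WithLp.equiv 2 (Fin 3 → ℝ)) h) 0
  have h1 : x 1 = y 1 := congrFun (congrArg (WithLp.equiv 2 (Fin 3 → ℝ)) h) 1
  ext i
  fin_cases i <;> assumption

noncomputable def sqDistOnLift (z : EuclideanSpace ℝ (Fin 2)) :
    EuclideanSpace ℝ (Fin 3) →ᵃ[ℝ] ℝ where
  toFun p := p 2 - 2 * z 0 * p 0 - 2 * z 1 * p 1 + (z 0 ^ 2 + z 1 ^ 2)
  linear :=
    { toFun := fun p => p 2 - 2 * z 0 * p 0 - 2 * z 1 * p 1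
      map_add' := fun p q => by simp only [PiLp.add_apply]; ring
      map_smul' := fun r p => by simp only [PiLp.smul_apply, smul_eq_mul, RingHom.id_apply]; ring }
  map_vadd' p v := by
    simp only [vadd_eq_add, PiLp.add_apply, LinearMap.coe_mk, AddHom.coe_mk]; ring

lemma sqDistOnLift_lift (z x : EuclideanSpace ℝ (Fin 2)) :
    sqDistOnLift z (lift x) = dist x z ^ 2 := by
  rw [EuclideanSpace.dist_eq, Real.sq_sqrt (by positivity)]
  simp only [sqDistOnLift, lift, WithLp.equiv_symm_apply, AffineMap.coe_mk, Matrix.cons_val,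
    Matrix.cons_val_zero, Matrix.cons_val_one, Real.dist_eq, sq_abs, Fin.sum_univ_two]
  ring

lemma sqDistOnLift_midpoint (z : EuclideanSpace ℝ (Fin 2)) (p q : EuclideanSpace ℝ (Fin 3)) :
    sqDistOnLift z ((1 / 2 : ℝ) • (p + q)) = (sqDistOnLift z p + sqDistOnLift z q) / 2 := by
  have := (sqDistOnLift z).map_midpoint p q
  rw [midpoint_eq_smul_add, midpoint_eq_smul_add] at this
  simpa [smul_eq_mul, div_eq_inv_mul] using this

lemma lift_mem_convexHull_image_lift_iff {s : Set (EuclideanSpace ℝ (Fin 2))}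
    {x : EuclideanSpace ℝ (Fin 2)} : lift x ∈ convexHull ℝ (lift '' s) ↔ x ∈ s := by
  refine ⟨fun hx => ?_, fun hx => subset_convexHull ℝ _ (Set.mem_image_of_mem lift hx)⟩
  by_contra hxs
  have hpos : lift '' s ⊆ sqDistOnLift x ⁻¹' Set.Ioi 0 := by
    rintro _ ⟨y, hy, rfl⟩
    simp only [Set.mem_preimage, Set.mem_Ioi, sqDistOnLift_lift]
    exact pow_pos (dist_pos.mpr (ne_of_mem_of_not_mem hy hxs)) 2
  have := convexHull_min hpos ((convex_Ioi 0).affine_preimage _) hx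
  simp [sqDistOnLift_lift] at this

lemma convexHull_image_lift_inter_image_lift {D I : Set (EuclideanSpace ℝ (Fin 2))}
    (hID : I ⊆ D) : convexHull ℝ (lift '' I) ∩ lift '' D = lift '' I := by
  ext p
  constructor
  · rintro ⟨hp, x, -, rfl⟩
    exact Set.mem_image_of_mem lift (lift_mem_convexHull_image_lift_iff.mp hp)
  · rintro ⟨x, hx, rfl⟩
    exact ⟨subset_convexHull ℝ _ ⟨x, hx, rfl⟩, x, hID hx, rfl⟩

lemma blocker_not_mem_convexHull {D I : Set (EuclideanSpace ℝ (Fin 2))}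
    (hsep : D.Pairwise fun p q => 2 ≤ dist p q) (hID : I ⊆ D)
    (hI : I.Pairwise fun p q => 2 < dist p q) {b : EuclideanSpace ℝ (Fin 3)}
    (hb : b ∈ blockers D) : b ∉ convexHull ℝ (lift '' I) := by
  obtain ⟨c, hc, c', hc', hcc', rfl⟩ := hb
  wlog hc'I : c' ∉ I generalizing c c'
  · have hcI : c ∉ I := fun hcI =>
      (hI hcI (not_not.mp hc'I) (by rintro rfl; simp at hcc')).ne' hcc'
    rw [add_comm]
    exact this c' hc' c hc (dist_comm c c' ▸ hcc') hcI
  have hfar : lift '' I ⊆ sqDistOnLift c' ⁻¹' Set.Ici 4 := by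
    rintro _ ⟨x, hx, rfl⟩
    have := hsep (hID hx) hc' (ne_of_mem_of_not_mem hx hc'I)
    simp only [Set.mem_preimage, Set.mem_Ici, sqDistOnLift_lift]
    nlinarith
  intro hmem
  have := convexHull_min hfar ((convex_Ici 4).affine_preimage _) hmem
  simp only [Set.mem_preimage, Set.mem_Ici, sqDistOnLift_midpoint, sqDistOnLift_lift, hcc',
    dist_self] at this
  norm_num at this

lemma blockers_inter_nonempty_of_not_pairwise {D T : Set (EuclideanSpace ℝ (Fin 2))}
    (hsep : D.Pairwise fun p q => 2 ≤ dist p q) {C : Set (EuclideanSpace ℝ (Fin 3))}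
    (hC : Convex ℝ C) (hTD : T ⊆ D) (hTC : lift '' T ⊆ C)
    (hT : ¬ T.Pairwise fun p q => 2 < dist p q) : (C ∩ blockers D).Nonempty := by
  simp only [Set.Pairwise, not_forall, not_lt] at hT
  obtain ⟨p, hp, q, hq, hpq, hle⟩ := hT
  have hpqC := hC (hTC ⟨p, hp, rfl⟩) (hTC ⟨q, hq, rfl⟩) (by norm_num : (0 : ℝ) ≤ 1 / 2)
    (by norm_num : (0 : ℝ) ≤ 1 / 2) (by norm_num)
  rw [← smul_add] at hpqC
  exact ⟨_, hpqC, p, hTD hp, q, hTD hq, hle.antisymm (hsep (hTD hp) (hTD hq) hpq), rfl⟩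

theorem weak_net_iff_no_independent_set_general (D : Set (EuclideanSpace ℝ (Fin 2)))
    (hsep : ∀ p ∈ D, ∀ q ∈ D, p ≠ q → 2 ≤ dist p q) (m : ℕ) :
    (∀ C : Set (EuclideanSpace ℝ (Fin 3)), Convex ℝ C →
        m ≤ (C ∩ lift '' D).ncard → (C ∩ blockers D).Nonempty) ↔
      ¬ ∃ I ⊆ D, (∀ p ∈ I, ∀ q ∈ I, p ≠ q → 2 < dist p q) ∧ I.ncard = m := by
  constructor
  · rintro hnet ⟨I, hID, hI, rfl⟩
    have hcount : I.ncard ≤ (convexHull ℝ (lift '' I) ∩ lift '' D).ncard := by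
      rw [convexHull_image_lift_inter_image_lift hID, Set.ncard_image_of_injective I lift_injective]
    obtain ⟨b, hbI, hbB⟩ := hnet _ (convex_convexHull ℝ _) hcount
    exact blocker_not_mem_convexHull hsep hID hI hbB hbI
  · rintro hno C hC hcount
    rw [Set.inter_comm, ← Set.image_inter_preimage,
      Set.ncard_image_of_injective _ lift_injective] at hcount
    obtain ⟨T, hTS, hTm⟩ := Set.exists_subset_card_eq hcount
    refine blockers_inter_nonempty_of_not_pairwise hsep hC (fun x hx => (hTS hx).1) ?_
      (fun hT => hno ⟨T, fun x hx => (hTS hx).1, hT, hTm⟩)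
    rintro _ ⟨x, hx, rfl⟩
    exact (hTS hx).2

/-- Let `D ⊆ ℝ²` be finite with pairwise distances at least `2`, let
`L = lift '' D`, `B` the blocking points, with `L` and `B` disjoint, and let `m ≥ 1`.
Then `B` is a weak `(m/|D|)`-net for `L` with respect to convex sets (every convex
`C ⊆ ℝ³` with `|C ∩ L| ≥ m` meets `B`) iff `D` contains no independent set of size `m`. -/
theorem weak_net_iff_no_independent_set (D : Set (EuclideanSpace ℝ (Fin 2)))
    (hD : D.Finite) (hsep : ∀ p ∈ D, ∀ q ∈ D, p ≠ q → 2 ≤ dist p q)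
    (hdisj : Disjoint (lift '' D) (blockers D)) (m : ℕ) (hm : 1 ≤ m) :
    (∀ C : Set (EuclideanSpace ℝ (Fin 3)), Convex ℝ C →
        m ≤ (C ∩ lift '' D).ncard → (C ∩ blockers D).Nonempty) ↔
      ¬ ∃ I ⊆ D, (∀ p ∈ I, ∀ q ∈ I, p ≠ q → 2 < dist p q) ∧ I.ncard = m :=
  weak_net_iff_no_independent_set_general D hsep m
end
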